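/- Define B(t) = Σ_{k=(t−s−1)_+}^{t−1} ‖x(k+1) − x(k)‖^2. Then for every t ∈ ℕ, F(x(t+s+1)) + (1/2)(1/η − L − 2s·L·√p)·B(t+s+1) ≤ F(x(t)) + (1/2)·s·L·√p·B(t). -/

import Mathlib

/-!
Comparing each proximal block update with the candidate `z = x_i(t)` gives a sufficient decrease
of `g_i` measured against the stale partial gradient `∇_i f(x^i(t))`, while the descent lemma for
`f` involves the true gradient `∇f(x(t))`. Blockwise, the mismatch is at most
`L ‖x(t) - x^i(t)‖ ≤ L ∑_{k ∈ [t-s, t)} ‖x(k+1) - x(k)‖`; Cauchy–Schwarz over the `p` blocks and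
AM–GM bound its total by `(L√p/2) (s ‖x(t+1) - x(t)‖² + ∑_{k ∈ [t-s, t)} ‖x(k+1) - x(k)‖²)`.
Summing this one-step inequality over `s + 1` consecutive steps costs a factor `s`, since each
increment lies in at most `s` delay windows.
-/

open Filter Topology

noncomputable abbrev EE (p : ℕ) (d : Fin p → ℕ) : Type :=
  PiLp 2 (fun i : Fin p => EuclideanSpace ℝ (Fin (d i)))

open RealInnerProductSpace Finset

theorem EReal.coe_finset_sum {ι : Type*} (s : Finset ι) (a : ι → ℝ) :
    ((∑ i ∈ s, a i : ℝ) : EReal) = ∑ i ∈ s, (a i : EReal) :=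
  map_sum (⟨⟨Real.toEReal, EReal.coe_zero⟩, EReal.coe_add⟩ : ℝ →+ EReal) a s

theorem EReal.ne_top_of_sum_ne_top {ι : Type*} {s : Finset ι} {a : ι → EReal}
    (hbot : ∀ i ∈ s, a i ≠ ⊥) (h : ∑ i ∈ s, a i ≠ ⊤) {i : ι} (hi : i ∈ s) : a i ≠ ⊤ := by
  classical
  intro hi_top
  have hrest : ∑ j ∈ s.erase i, a j ≠ ⊥ :=
    sum_induction _ (· ≠ ⊥) (fun _ _ ha hb => add_ne_bot_iff.2 ⟨ha, hb⟩) zero_ne_bot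
      fun j hj => hbot j (mem_of_mem_erase hj)
  rw [← add_sum_erase s a hi, hi_top, top_add_of_ne_bot hrest] at h
  exact h rfl

theorem le_add_inner_add_of_lipschitz_gradient {H : Type*} [NormedAddCommGroup H]
    [InnerProductSpace ℝ H] [CompleteSpace H] {f : H → ℝ} {f' : H → H} {L : ℝ}
    (hf : ∀ y, HasGradientAt f (f' y) y) (hlip : ∀ y z, ‖f' y - f' z‖ ≤ L * ‖y - z‖) (a b : H) :
    f b ≤ f a + ⟪f' a, b - a⟫ + L / 2 * ‖b - a‖ ^ 2 := by
  set Δ := b - a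
  let φ : ℝ → ℝ := fun θ => f (a + θ • Δ) - θ * ⟪f' a, Δ⟫ - L / 2 * θ ^ 2 * ‖Δ‖ ^ 2
  have hφ : ∀ θ, HasDerivAt φ (⟪f' (a + θ • Δ) - f' a, Δ⟫ - L * θ * ‖Δ‖ ^ 2) θ := by
    intro θ
    have hline : HasDerivAt (fun θ : ℝ => a + θ • Δ) Δ θ := by
      simpa using ((hasDerivAt_id θ).smul_const Δ).const_add a
    have hcomp := (hf (a + θ • Δ)).hasFDerivAt.comp_hasDerivAt θ hline
    simp only [InnerProductSpace.toDual_apply_apply] at hcomp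
    refine ((hcomp.sub ((hasDerivAt_id θ).mul_const ⟪f' a, Δ⟫)).sub
      (((hasDerivAt_pow 2 θ).const_mul (L / 2)).mul_const (‖Δ‖ ^ 2))).congr_deriv ?_
    rw [inner_sub_left, Nat.add_one_sub_one, pow_one]
    push_cast
    ring
  have hanti : AntitoneOn φ (Set.Icc 0 1) := by
    refine antitoneOn_of_hasDerivWithinAt_nonpos (convex_Icc 0 1)
      (fun θ _ => (hφ θ).continuousAt.continuousWithinAt) (fun θ _ => (hφ θ).hasDerivWithinAt)
      fun θ hθ => ?_
    rw [interior_Icc] at hθ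
    have hgrad : ‖f' (a + θ • Δ) - f' a‖ ≤ L * (θ * ‖Δ‖) := by
      simpa [norm_smul, abs_of_pos hθ.1] using hlip (a + θ • Δ) a
    have := real_inner_le_norm (f' (a + θ • Δ) - f' a) Δ
    nlinarith [norm_nonneg Δ]
  have := hanti (Set.left_mem_Icc.2 zero_le_one) (Set.right_mem_Icc.2 zero_le_one) zero_le_one
  simp only [φ, Δ, one_smul, add_sub_cancel, zero_smul, add_zero] at this
  linarith

theorem add_norm_sq_add_inner_le_of_prox {H : Type*} [NormedAddCommGroup H]
    [InnerProductSpace ℝ H] {η a b : ℝ} (hη : η ≠ 0) {x y v : H}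
    (h : a + 1 / (2 * η) * ‖y - (x - η • v)‖ ^ 2 ≤ b + 1 / (2 * η) * ‖x - (x - η • v)‖ ^ 2) :
    a + 1 / (2 * η) * ‖y - x‖ ^ 2 + ⟪y - x, v⟫ ≤ b := by
  have hexpand :
      ‖y - (x - η • v)‖ ^ 2 = ‖y - x‖ ^ 2 + 2 * η * ⟪y - x, v⟫ + ‖x - (x - η • v)‖ ^ 2 := by
    rw [show y - (x - η • v) = (y - x) + η • v by abel, show x - (x - η • v) = η • v by abel,
      norm_add_sq_real, real_inner_smul_right]
    ring
  have hcancel : 1 / (2 * η) * (2 * η * ⟪y - x, v⟫) = ⟪y - x, v⟫ := by field_simp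
  rw [hexpand, mul_add, mul_add, hcancel] at h
  linarith

section ProxImproves

variable {H : Type*} [NormedAddCommGroup H] [InnerProductSpace ℝ H]

/-- `x'` is no worse than `x` for the proximal subproblem at `x - η • v`; this holds both for a
proximal step and for a skipped update `x' = x`. -/
def ProxImproves (g : H → EReal) (η : ℝ) (x v x' : H) : Prop :=
  g x' + ((1 / (2 * η) * ‖x' - (x - η • v)‖ ^ 2 : ℝ) : EReal) ≤
    g x + ((1 / (2 * η) * ‖x - (x - η • v)‖ ^ 2 : ℝ) : EReal)

variable {g : H → EReal} {η : ℝ} {x v x' : H}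

theorem ProxImproves.refl : ProxImproves g η x v x := le_rfl

theorem ProxImproves.ne_top (h : ProxImproves g η x v x') (hx : g x ≠ ⊤) : g x' ≠ ⊤ := by
  intro htop
  have hlt := h.trans_lt (EReal.add_lt_top hx (EReal.coe_ne_top _))
  rw [htop, EReal.top_add_of_ne_bot (EReal.coe_ne_bot _)] at hlt
  exact hlt.false

theorem ProxImproves.forall_ne_top {y v : ℕ → H}
    (h : ∀ t, ProxImproves g η (y t) (v t) (y (t + 1))) (h0 : g (y 0) ≠ ⊤) (t : ℕ) :
    g (y t) ≠ ⊤ := by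
  induction t with
  | zero => exact h0
  | succ t ih => exact (h t).ne_top ih

theorem ProxImproves.toReal_add_le (h : ProxImproves g η x v x') (hη : η ≠ 0) (hbot : ∀ z, g z ≠ ⊥)
    (hx : g x ≠ ⊤) : (g x').toReal + 1 / (2 * η) * ‖x' - x‖ ^ 2 + ⟪x' - x, v⟫ ≤ (g x).toReal := by
  refine add_norm_sq_add_inner_le_of_prox hη ?_
  rw [← EReal.coe_le_coe_iff, EReal.coe_add, EReal.coe_add,
    EReal.coe_toReal (h.ne_top hx) (hbot x'), EReal.coe_toReal hx (hbot x)]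
  exact h

end ProxImproves

theorem mul_sum_le_sum_sq_add_card_mul_sq {ι : Type*} (S : Finset ι) (a : ι → ℝ) (b : ℝ) :
    (∑ k ∈ S, a k) * b ≤ (∑ k ∈ S, a k ^ 2 + #S * b ^ 2) / 2 := by
  rw [sum_mul, card_eq_sum_ones, Nat.cast_sum, sum_mul, ← sum_add_distrib, sum_div]
  exact sum_le_sum fun k _ => by nlinarith [sq_nonneg (a k - b)]

theorem sum_Ico_sum_Ico_sub_le {a : ℕ → ℝ} (ha : ∀ k, 0 ≤ a k) {m s t : ℕ} (hm : m ≤ t - s)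
    (n : ℕ) : ∑ u ∈ Ico t (t + n), ∑ k ∈ Ico (u - s) u, a k ≤ s * ∑ k ∈ Ico m (t + n), a k := by
  -- each `k` lies in at most `s` of the windows `[u - s, u)`
  rw [sum_comm' (t' := Ico m (t + n))
    (s' := fun k => Ico (max t (k + 1)) (min (t + n) (k + s + 1)))
    (fun u k => by simp only [mem_Ico]; omega), mul_sum]
  refine sum_le_sum fun k _ => ?_
  rw [sum_const, nsmul_eq_mul, Nat.card_Ico]
  exact mul_le_mul_of_nonneg_right (by norm_cast; omega) (ha k)

theorem add_sum_Ico_le_of_delayed_descent {Φ a : ℕ → ℝ} {c K : ℝ} {s : ℕ} (ha : ∀ k, 0 ≤ a k)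
    (hK : 0 ≤ K) (h : ∀ u, Φ (u + 1) + c * a u ≤ Φ u + K * ∑ k ∈ Ico (u - s) u, a k) {m t : ℕ}
    (hm : m ≤ t - s) (n : ℕ) :
    Φ (t + n) + (c - s * K) * ∑ k ∈ Ico t (t + n), a k ≤ Φ t + s * K * ∑ k ∈ Ico m t, a k := by
  have htel : Φ (t + n) + c * ∑ k ∈ Ico t (t + n), a k ≤
      Φ t + K * ∑ u ∈ Ico t (t + n), ∑ k ∈ Ico (u - s) u, a k := by
    induction n with
    | zero => simp
    | succ n ih =>
      rw [← add_assoc, sum_Ico_succ_top (by omega), sum_Ico_succ_top (by omega)]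
      linarith [h (t + n)]
  have hwin := mul_le_mul_of_nonneg_left (sum_Ico_sum_Ico_sub_le ha hm n) hK
  rw [← sum_Ico_consecutive a (hm.trans (Nat.sub_le t s)) (Nat.le_add_right t n)] at hwin
  linarith

namespace PiLp

variable {ι : Type*} [Fintype ι] {E : ι → Type*} [∀ i, NormedAddCommGroup (E i)]

theorem norm_le_norm_of_forall_norm_apply_le {v w : PiLp 2 E} (h : ∀ i, ‖v i‖ ≤ ‖w i‖) :
    ‖v‖ ≤ ‖w‖ := by
  rw [← sq_le_sq₀ (norm_nonneg _) (norm_nonneg _), norm_sq_eq_of_L2, norm_sq_eq_of_L2]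
  gcongr with i
  exact h i

theorem sum_norm_apply_le_sqrt_card_mul_norm (w : PiLp 2 E) :
    ∑ i, ‖w i‖ ≤ √(Fintype.card ι) * ‖w‖ := by
  rw [← sq_le_sq₀ (sum_nonneg fun i _ => norm_nonneg _) (by positivity), mul_pow,
    Real.sq_sqrt (Nat.cast_nonneg _), norm_sq_eq_of_L2, ← card_univ]
  exact sq_sum_le_card_mul_sum_sq

theorem norm_sub_le_sum_Ico_of_delayed (X : ℕ → PiLp 2 E) {σ : ι → ℕ} {s t : ℕ}
    (hσ_le : ∀ j, σ j ≤ t) (hσ_ge : ∀ j, t ≤ σ j + s) {Y : PiLp 2 E} (hY : ∀ j, Y j = X (σ j) j) :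
    ‖X t - Y‖ ≤ ∑ k ∈ Ico (t - s) t, ‖X (k + 1) - X k‖ := by
  -- `Z k` has caught up, block by block, with `X` up to time `k`; it runs from `Y` to `X t`
  let Z : ℕ → PiLp 2 E := fun k => WithLp.toLp 2 fun j => X (max (σ j) k) j
  have hZt : Z t = X t := by ext j; simp [Z, max_eq_right (hσ_le j)]
  have hZs : Z (t - s) = Y := by ext j; simp [Z, hY, max_eq_left (Nat.sub_le_of_le_add (hσ_ge j))]
  have hZ_step : ∀ k, ‖Z (k + 1) - Z k‖ ≤ ‖X (k + 1) - X k‖ := by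
    refine fun k => norm_le_norm_of_forall_norm_apply_le fun j => ?_
    simp only [Z, sub_apply]
    rcases le_or_gt (σ j) k with h | h
    · rw [max_eq_right h, max_eq_right (by omega)]
    · rw [max_eq_left h.le, max_eq_left h, sub_self, norm_zero]
      exact norm_nonneg _
  calc ‖X t - Y‖ = dist (Z (t - s)) (Z t) := by rw [dist_comm, dist_eq_norm, hZt, hZs]
    _ ≤ ∑ k ∈ Ico (t - s) t, dist (Z k) (Z (k + 1)) := dist_le_Ico_sum_dist Z (Nat.sub_le t s)
    _ ≤ ∑ k ∈ Ico (t - s) t, ‖X (k + 1) - X k‖ :=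
      sum_le_sum fun k _ => by rw [dist_comm, dist_eq_norm]; exact hZ_step k

end PiLp

section DelayedBlockProxGradient

variable {ι : Type*} [Fintype ι] {E : ι → Type*} [∀ i, NormedAddCommGroup (E i)]
  [∀ i, InnerProductSpace ℝ (E i)] [∀ i, CompleteSpace (E i)]
  {f : PiLp 2 E → ℝ} {f' : PiLp 2 E → PiLp 2 E} {L η : ℝ}

theorem delayed_block_prox_grad_step (hf : ∀ y, HasGradientAt f (f' y) y)
    (hlip : ∀ y z, ‖f' y - f' z‖ ≤ L * ‖y - z‖) (hL : 0 ≤ L) {y y' : PiLp 2 E}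
    {z : ι → PiLp 2 E} {δ : ℝ} (hδ : 0 ≤ δ) (hz : ∀ i, ‖y - z i‖ ≤ δ) {G G' : ι → ℝ}
    (hprox : ∀ i, G' i + 1 / (2 * η) * ‖y' i - y i‖ ^ 2 + ⟪y' i - y i, f' (z i) i⟫ ≤ G i) :
    f y' + ∑ i, G' i + (1 / (2 * η) - L / 2) * ‖y' - y‖ ^ 2 ≤
      f y + ∑ i, G i + L * √(Fintype.card ι) * δ * ‖y' - y‖ := by
  have hdescent := le_add_inner_add_of_lipschitz_gradient hf hlip y y'
  have hprox_sum : ∑ i, G' i + 1 / (2 * η) * ‖y' - y‖ ^ 2 + ∑ i, ⟪(y' - y) i, f' (z i) i⟫ ≤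
      ∑ i, G i := by
    simpa only [PiLp.norm_sq_eq_of_L2, mul_sum, PiLp.sub_apply, ← sum_add_distrib]
      using sum_le_sum fun i (_ : i ∈ univ) => hprox i
  have hblock : ∀ i, ⟪(y' - y) i, (f' y - f' (z i)) i⟫ ≤ ‖(y' - y) i‖ * (L * δ) := fun i =>
    (real_inner_le_norm _ _).trans <| mul_le_mul_of_nonneg_left
      ((PiLp.norm_apply_le _ i).trans <| (hlip _ _).trans <| mul_le_mul_of_nonneg_left (hz i) hL)
      (norm_nonneg _)
  have hcross : ⟪f' y, y' - y⟫ - ∑ i, ⟪(y' - y) i, f' (z i) i⟫ ≤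
      √(Fintype.card ι) * ‖y' - y‖ * (L * δ) := by
    rw [real_inner_comm, PiLp.inner_apply, ← sum_sub_distrib]
    simp only [← inner_sub_right, ← PiLp.sub_apply]
    exact (sum_le_sum fun i _ => hblock i).trans <| by
      rw [← sum_mul]
      exact mul_le_mul_of_nonneg_right (PiLp.sum_norm_apply_le_sqrt_card_mul_norm _)
        (mul_nonneg hL hδ)
  linarith

theorem delayed_block_prox_grad_descent (hf : ∀ y, HasGradientAt f (f' y) y)
    (hlip : ∀ y z, ‖f' y - f' z‖ ≤ L * ‖y - z‖) (hL : 0 ≤ L) {s : ℕ} {X : ℕ → PiLp 2 E}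
    {Xl : ι → ℕ → PiLp 2 E} {G : ι → ℕ → ℝ}
    (hdelay : ∀ i u, ‖X u - Xl i u‖ ≤ ∑ k ∈ Ico (u - s) u, ‖X (k + 1) - X k‖)
    (hprox : ∀ i u, G i (u + 1) + 1 / (2 * η) * ‖X (u + 1) i - X u i‖ ^ 2 +
      ⟪X (u + 1) i - X u i, f' (Xl i u) i⟫ ≤ G i u) (u : ℕ) :
    f (X (u + 1)) + ∑ i, G i (u + 1) +
        (1 / (2 * η) - L / 2 - s * L * √(Fintype.card ι) / 2) * ‖X (u + 1) - X u‖ ^ 2 ≤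
      f (X u) + ∑ i, G i u +
        L * √(Fintype.card ι) / 2 * ∑ k ∈ Ico (u - s) u, ‖X (k + 1) - X k‖ ^ 2 := by
  have hstep := delayed_block_prox_grad_step hf hlip hL
    (sum_nonneg fun k _ => norm_nonneg _) (fun i => hdelay i u) (fun i => hprox i u)
  have hamgm := mul_sum_le_sum_sq_add_card_mul_sq (Ico (u - s) u)
    (fun k => ‖X (k + 1) - X k‖) ‖X (u + 1) - X u‖
  have hcard : ((#(Ico (u - s) u) : ℕ) : ℝ) ≤ s := by
    rw [Nat.card_Ico]
    exact_mod_cast (by omega : u - (u - s) ≤ s)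
  have hLp : 0 ≤ L * √(Fintype.card ι) := mul_nonneg hL (Real.sqrt_nonneg _)
  nlinarith [mul_le_mul_of_nonneg_left hamgm hLp,
    mul_le_mul_of_nonneg_left hcard (mul_nonneg hLp (sq_nonneg ‖X (u + 1) - X u‖))]

end DelayedBlockProxGradient

theorem stmt_9_general
    (p s : ℕ) (d : Fin p → ℕ)
    (τ : Fin p → Fin p → ℕ → ℕ)
    (hτ_le : ∀ i j t, τ i j t ≤ t)
    (hτ_ge : ∀ i j t, t ≤ τ i j t + s)
    (x : (i : Fin p) → ℕ → EuclideanSpace ℝ (Fin (d i)))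
    (X : ℕ → EE p d) (hX : ∀ t i, X t i = x i t)
    (Xl : Fin p → ℕ → EE p d) (hXl : ∀ i t j, Xl i t j = x j (τ i j t))
    (T : Fin p → Set ℕ)
    (η L : ℝ) (hη : 0 < η) (hL : 0 < L)
    (f : EE p d → ℝ) (f' : EE p d → EE p d)
    (hf : ∀ y, HasGradientAt f (f' y) y)
    (hlip : ∀ y z, ‖f' y - f' z‖ ≤ L * ‖y - z‖)
    (g : (i : Fin p) → EuclideanSpace ℝ (Fin (d i)) → EReal)
    (hg_nebot : ∀ i z, g i z ≠ ⊥)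
    (F : EE p d → EReal)
    (hF : ∀ y, F y = (f y : EReal) + ∑ i, g i (y i))
    (hF0 : F (X 0) < ⊤)
    (hskip : ∀ i t, t ∉ T i → x i (t + 1) = x i t)
    (hupd : ∀ i t, t ∈ T i → ∀ z : EuclideanSpace ℝ (Fin (d i)),
      g i (x i (t + 1)) +
        ((1 / (2 * η) * ‖x i (t + 1) - (x i t - η • f' (Xl i t) i)‖ ^ 2 : ℝ) : EReal)
      ≤ g i z + ((1 / (2 * η) * ‖z - (x i t - η • f' (Xl i t) i)‖ ^ 2 : ℝ) : EReal))
    :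
    ∀ t : ℕ,
      F (X (t + s + 1)) +
        ((1 / 2 * (1 / η - L - 2 * s * L * Real.sqrt p) *
            ∑ k ∈ Finset.Ico (t + s + 1 - (s + 1)) (t + s + 1), ‖X (k + 1) - X k‖ ^ 2 : ℝ) : EReal)
      ≤ F (X t) +
        ((1 / 2 * s * L * Real.sqrt p *
            ∑ k ∈ Finset.Ico (t - (s + 1)) t, ‖X (k + 1) - X k‖ ^ 2 : ℝ) : EReal) := by
  have himp : ∀ i t, ProxImproves (g i) η (x i t) (f' (Xl i t) i) (x i (t + 1)) := fun i t => by
    by_cases ht : t ∈ T i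
    · exact hupd i t ht (x i t)
    · rw [hskip i t ht]; exact .refl
  have hsum0 : ∑ i, g i (X 0 i) ≠ ⊤ := (EReal.add_ne_top_iff_ne_top_right (EReal.coe_ne_bot _)
    (EReal.coe_ne_top _)).1 (hF (X 0) ▸ hF0.ne)
  have hfin : ∀ i t, g i (x i t) ≠ ⊤ := fun i => ProxImproves.forall_ne_top (himp i) <| by
    simpa only [hX] using EReal.ne_top_of_sum_ne_top (fun j _ => hg_nebot j _) hsum0 (mem_univ i)
  set G : Fin p → ℕ → ℝ := fun i t => (g i (x i t)).toReal
  have hprox : ∀ i u, G i (u + 1) + 1 / (2 * η) * ‖X (u + 1) i - X u i‖ ^ 2 +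
      ⟪X (u + 1) i - X u i, f' (Xl i u) i⟫ ≤ G i u := fun i u => by
    simpa only [hX] using (himp i u).toReal_add_le hη.ne' (hg_nebot i) (hfin i u)
  have hdelay : ∀ i u, ‖X u - Xl i u‖ ≤ ∑ k ∈ Ico (u - s) u, ‖X (k + 1) - X k‖ := fun i u =>
    PiLp.norm_sub_le_sum_Ico_of_delayed X (hτ_le i · u) (hτ_ge i · u) fun j => by rw [hXl, hX]
  have hF_eq : ∀ t, F (X t) = ((f (X t) + ∑ i, G i t : ℝ) : EReal) := fun t => by
    rw [hF, EReal.coe_add, EReal.coe_finset_sum]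
    simp only [G, hX, EReal.coe_toReal (hfin _ _) (hg_nebot _ _)]
  intro t
  have key := add_sum_Ico_le_of_delayed_descent (Φ := fun u => f (X u) + ∑ i, G i u)
    (fun k => sq_nonneg ‖X (k + 1) - X k‖) (by positivity : 0 ≤ L * √(Fintype.card (Fin p)) / 2)
    (delayed_block_prox_grad_descent hf hlip hL.le hdelay hprox) (by omega : t - (s + 1) ≤ t - s)
    (s + 1)
  rw [Fintype.card_fin, ← add_assoc,
    show 1 / (2 * η) - L / 2 - s * L * √p / 2 - s * (L * √p / 2) =
      1 / 2 * (1 / η - L - 2 * s * L * √p) by ring,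
    show (s : ℝ) * (L * √p / 2) = 1 / 2 * s * L * √p by ring] at key
  rwa [hF_eq, hF_eq, ← EReal.coe_add, ← EReal.coe_add, EReal.coe_le_coe_iff,
    show t + s + 1 - (s + 1) = t by omega]

theorem stmt_9
    (p s : ℕ) (hp : 1 ≤ p) (d : Fin p → ℕ) (hd : ∀ i, 1 ≤ d i)
    (τ : Fin p → Fin p → ℕ → ℕ)
    (hτ_le : ∀ i j t, τ i j t ≤ t)
    (hτ_ge : ∀ i j t, t ≤ τ i j t + s)
    (hτ_self : ∀ i t, τ i i t = t)
    (x : (i : Fin p) → ℕ → EuclideanSpace ℝ (Fin (d i)))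
    (X : ℕ → EE p d) (hX : ∀ t i, X t i = x i t)
    (Xl : Fin p → ℕ → EE p d) (hXl : ∀ i t j, Xl i t j = x j (τ i j t))
    (T : Fin p → Set ℕ)
    (hT : ∀ i t, ∃ k ∈ T i, t ≤ k ∧ k ≤ t + s)
    (η L : ℝ) (hη : 0 < η) (hL : 0 < L)
    (f : EE p d → ℝ) (f' : EE p d → EE p d)
    (hf : ∀ y, HasGradientAt f (f' y) y)
    (hlip : ∀ y z, ‖f' y - f' z‖ ≤ L * ‖y - z‖)
    (g : (i : Fin p) → EuclideanSpace ℝ (Fin (d i)) → EReal)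
    (hg_nebot : ∀ i z, g i z ≠ ⊥)
    (hg_proper : ∀ i, ∃ z, g i z ≠ ⊤)
    (hg_lsc : ∀ i, LowerSemicontinuous (g i))
    (F : EE p d → EReal)
    (hF : ∀ y, F y = (f y : EReal) + ∑ i, g i (y i))
    (hF_bdd : ∃ m : ℝ, ∀ y, (m : EReal) ≤ F y)
    (hF0 : F (X 0) < ⊤)
    (hskip : ∀ i t, t ∉ T i → x i (t + 1) = x i t)
    (hupd : ∀ i t, t ∈ T i → ∀ z : EuclideanSpace ℝ (Fin (d i)),
      g i (x i (t + 1)) +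
        ((1 / (2 * η) * ‖x i (t + 1) - (x i t - η • f' (Xl i t) i)‖ ^ 2 : ℝ) : EReal)
      ≤ g i z + ((1 / (2 * η) * ‖z - (x i t - η • f' (Xl i t) i)‖ ^ 2 : ℝ) : EReal))
    :
    ∀ t : ℕ,
      F (X (t + s + 1)) +
        ((1 / 2 * (1 / η - L - 2 * s * L * Real.sqrt p) *
            ∑ k ∈ Finset.Ico (t + s + 1 - (s + 1)) (t + s + 1), ‖X (k + 1) - X k‖ ^ 2 : ℝ) : EReal)
      ≤ F (X t) +
        ((1 / 2 * s * L * Real.sqrt p *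
            ∑ k ∈ Finset.Ico (t - (s + 1)) t, ‖X (k + 1) - X k‖ ^ 2 : ℝ) : EReal) :=
  stmt_9_general p s d τ hτ_le hτ_ge x X hX Xl hXl T η L hη hL f f' hf hlip g hg_nebot F hF hF0
    hskip hupd
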